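/- Let n ≥ 1 be an integer and let α, β > 0 be real numbers with α ≠ n, β ≠ n, and α + β > n. Then there is a constant C = C(n, α, β) such that for all x ∈ ℝⁿ: ∫_{ℝⁿ} ⟨x − x₁⟩^{−α} ⟨x₁⟩^{−β} dx₁ ≤ C ⟨x⟩^{−min(α, β, α+β−n)}. -/

import Mathlib

/-!
Split the domain according to whether `y` or `x - y` is nearer to the origin. The substitution
`y ↦ x - y` exchanges the two pieces together with `α` and `β`, so it suffices to bound the piece
`‖y‖ ≤ ‖x - y‖`, on which `⟨x - y⟩` dominates both `⟨x⟩ / 2` and `⟨y⟩`. Over `‖y‖ < ⟨x⟩` the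
integrand is then at most `2^α ⟨x⟩^{-α} ⟨y⟩^{-β}`, and `∫_{‖y‖ < R} ⟨y⟩^{-β} = O(R^{max(n - β, 0)})`
(`β ≠ n` excludes a logarithm); over `‖y‖ ≥ ⟨x⟩` it is at most `⟨y⟩^{-(α + β)}`, whose tail
integral is `O(⟨x⟩^{n - α - β})`. Both radial bounds follow by rescaling `y ↦ R⁻¹ • y`, from the
local integrability of `‖y‖^{-β}` for `β < n` and the integrability of `⟨y⟩^{-(α + β)}`.
-/

open MeasureTheory Real Set Metric Module
open scoped ENNReal

section JapaneseBracket

variable {E : Type*} [NormedAddCommGroup E]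

noncomputable def japaneseBracket (x : E) : ℝ := √(1 + ‖x‖ ^ 2)

lemma one_le_japaneseBracket (x : E) : 1 ≤ japaneseBracket x :=
  one_le_sqrt.mpr (by nlinarith [sq_nonneg ‖x‖])

lemma japaneseBracket_pos (x : E) : 0 < japaneseBracket x :=
  one_pos.trans_le (one_le_japaneseBracket x)

lemma norm_lt_japaneseBracket (x : E) : ‖x‖ < japaneseBracket x :=
  (lt_sqrt (norm_nonneg x)).mpr (by linarith)

lemma japaneseBracket_le_japaneseBracket {x y : E} (h : ‖x‖ ≤ ‖y‖) :
    japaneseBracket x ≤ japaneseBracket y :=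
  sqrt_le_sqrt (by gcongr)

lemma japaneseBracket_rpow_neg_le_two_rpow_mul {x y : E} (h : ‖x‖ ≤ 2 * ‖y‖) {α : ℝ}
    (hα : 0 ≤ α) : japaneseBracket y ^ (-α) ≤ 2 ^ α * japaneseBracket x ^ (-α) := by
  have hxy : japaneseBracket x / 2 ≤ japaneseBracket y := by
    rw [div_le_iff₀ two_pos, japaneseBracket, japaneseBracket,
      show √(1 + ‖y‖ ^ 2) * 2 = √(4 * (1 + ‖y‖ ^ 2)) by
        rw [sqrt_mul (by norm_num), show (4 : ℝ) = 2 ^ 2 by norm_num, sqrt_sq two_pos.le]; ring]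
    exact sqrt_le_sqrt (by nlinarith [norm_nonneg x])
  calc japaneseBracket y ^ (-α)
      ≤ (japaneseBracket x / 2) ^ (-α) :=
        rpow_le_rpow_of_nonpos (by linarith [japaneseBracket_pos x]) hxy (neg_nonpos.mpr hα)
    _ = 2 ^ α * japaneseBracket x ^ (-α) := by
        rw [div_rpow (japaneseBracket_pos x).le two_pos.le, rpow_neg two_pos.le]
        field_simp

lemma japaneseBracket_rpow_neg_le_of_le_norm [NormedSpace ℝ E] {R : ℝ} (hR : 0 < R) {y : E}
    (h : R ≤ ‖y‖) {γ : ℝ} (hγ : 0 ≤ γ) :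
    japaneseBracket y ^ (-γ) ≤ √2 ^ γ * R ^ (-γ) * japaneseBracket (R⁻¹ • y) ^ (-γ) := by
  have hmul : R * japaneseBracket (R⁻¹ • y) ≤ √2 * japaneseBracket y := by
    rw [japaneseBracket, japaneseBracket, ← sqrt_mul two_pos.le,
      le_sqrt' (mul_pos hR (sqrt_pos.mpr (by positivity))), mul_pow, sq_sqrt (by positivity),
      norm_smul, norm_inv, Real.norm_of_nonneg hR.le, mul_add, mul_pow, ← mul_assoc, ← mul_pow,
      mul_inv_cancel₀ hR.ne']
    nlinarith
  have hpos := mul_pos hR (japaneseBracket_pos (R⁻¹ • y))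
  have := rpow_le_rpow_of_nonpos hpos hmul (neg_nonpos.mpr hγ)
  rw [mul_rpow (sqrt_nonneg 2) (japaneseBracket_pos y).le,
    mul_rpow hR.le (japaneseBracket_pos _).le, rpow_neg (sqrt_nonneg 2)] at this
  have h2 : 0 < √2 ^ γ := rpow_pos_of_pos (sqrt_pos.mpr two_pos) γ
  rw [inv_mul_le_iff₀ h2] at this
  linarith

lemma ofReal_japaneseBracket_rpow_neg_le_enorm_rpow (y : E) {γ : ℝ} (hγ : 0 ≤ γ) :
    ENNReal.ofReal (japaneseBracket y ^ (-γ)) ≤ ‖y‖ₑ ^ (-γ) := by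
  rw [← ENNReal.ofReal_rpow_of_pos (japaneseBracket_pos y), ENNReal.rpow_neg, ENNReal.rpow_neg,
    ENNReal.inv_le_inv, ← ofReal_norm]
  exact ENNReal.rpow_le_rpow (ENNReal.ofReal_le_ofReal (norm_lt_japaneseBracket y).le) hγ

end JapaneseBracket

section Domination

variable {E : Type*} [NormedAddCommGroup E] [MeasurableSpace E] [OpensMeasurableSpace E]
  (μ : Measure E)

lemma measurableSet_norm_le_norm_sub (x : E) : MeasurableSet {y : E | ‖y‖ ≤ ‖x - y‖} :=
  measurableSet_le continuous_norm.measurable (continuous_const.sub continuous_id).norm.measurable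

lemma setLIntegral_norm_le_norm_sub_inter_ball_le {α β : ℝ} (hα : 0 ≤ α) (x : E) :
    ∫⁻ y in {y | ‖y‖ ≤ ‖x - y‖} ∩ ball 0 (japaneseBracket x),
        ENNReal.ofReal (japaneseBracket (x - y) ^ (-α) * japaneseBracket y ^ (-β)) ∂μ ≤
      ENNReal.ofReal (2 ^ α * japaneseBracket x ^ (-α)) *
        ∫⁻ y in ball 0 (japaneseBracket x), ENNReal.ofReal (japaneseBracket y ^ (-β)) ∂μ := by
  rw [← lintegral_const_mul' _ _ ENNReal.ofReal_ne_top]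
  refine (setLIntegral_mono' ((measurableSet_norm_le_norm_sub x).inter measurableSet_ball)
      fun y hy => ?_).trans (lintegral_mono_set inter_subset_right)
  have hxy : ‖y‖ ≤ ‖x - y‖ := hy.1
  have hx : ‖x‖ ≤ 2 * ‖x - y‖ := by linarith [norm_le_norm_add_norm_sub' x y]
  rw [← ENNReal.ofReal_mul (mul_nonneg (by positivity) (rpow_nonneg (japaneseBracket_pos x).le _))]
  exact ENNReal.ofReal_le_ofReal (mul_le_mul_of_nonneg_right
    (japaneseBracket_rpow_neg_le_two_rpow_mul hx hα) (rpow_nonneg (japaneseBracket_pos y).le _))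

lemma setLIntegral_norm_le_norm_sub_diff_ball_le {α β : ℝ} (hα : 0 ≤ α) (x : E) :
    ∫⁻ y in {y | ‖y‖ ≤ ‖x - y‖} \ ball 0 (japaneseBracket x),
        ENNReal.ofReal (japaneseBracket (x - y) ^ (-α) * japaneseBracket y ^ (-β)) ∂μ ≤
      ∫⁻ y in {y | japaneseBracket x ≤ ‖y‖},
        ENNReal.ofReal (japaneseBracket y ^ (-(α + β))) ∂μ := by
  refine (setLIntegral_mono' ((measurableSet_norm_le_norm_sub x).diff measurableSet_ball)
      fun y hy => ?_).trans (lintegral_mono_set fun y hy => by simpa using hy.2)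
  rw [neg_add, rpow_add (japaneseBracket_pos y)]
  exact ENNReal.ofReal_le_ofReal (mul_le_mul_of_nonneg_right
    (rpow_le_rpow_of_nonpos (japaneseBracket_pos y) (japaneseBracket_le_japaneseBracket hy.1)
      (neg_nonpos.mpr hα)) (rpow_nonneg (japaneseBracket_pos y).le _))

end Domination

section Integral

variable {E : Type*} [NormedAddCommGroup E] [NormedSpace ℝ E] [FiniteDimensional ℝ E]
  [MeasurableSpace E] [BorelSpace E] (μ : Measure E) [μ.IsAddHaarMeasure]

lemma lintegral_comp_inv_smul_of_pos (f : E → ℝ≥0∞) {R : ℝ} (hR : 0 < R) :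
    ∫⁻ y, f (R⁻¹ • y) ∂μ = ENNReal.ofReal (R ^ finrank ℝ E) * ∫⁻ y, f y ∂μ := by
  have hR' : R⁻¹ ≠ 0 := inv_ne_zero hR.ne'
  calc ∫⁻ y, f (R⁻¹ • y) ∂μ = ∫⁻ y, f y ∂(Measure.map (R⁻¹ • ·) μ) :=
        (lintegral_map_equiv f (MeasurableEquiv.smul₀ R⁻¹ hR')).symm
    _ = _ := by
        rw [Measure.map_addHaar_smul μ hR', lintegral_smul_measure, inv_pow, inv_inv,
          abs_of_pos (by positivity), smul_eq_mul]

lemma setLIntegral_ball_enorm_rpow_neg {R : ℝ} (hR : 0 < R) (γ : ℝ) :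
    ∫⁻ y in ball (0 : E) R, ‖y‖ₑ ^ (-γ) ∂μ =
      ENNReal.ofReal (R ^ ((finrank ℝ E : ℝ) - γ)) * ∫⁻ y in ball (0 : E) 1, ‖y‖ₑ ^ (-γ) ∂μ := by
  have hmem : ∀ y : E, R⁻¹ • y ∈ ball (0 : E) 1 ↔ y ∈ ball 0 R := fun y => by
    rw [← mem_preimage, preimage_smul_inv₀ hR.ne', smul_unitBall_of_pos hR]
  have hscale : ∀ y : E, (ball (0 : E) R).indicator (‖·‖ₑ ^ (-γ)) y =
      ENNReal.ofReal (R ^ (-γ)) * (ball (0 : E) 1).indicator (‖·‖ₑ ^ (-γ)) (R⁻¹ • y) := by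
    intro y
    by_cases hy : y ∈ ball (0 : E) R
    · rw [indicator_of_mem hy, indicator_of_mem ((hmem y).mpr hy)]
      conv_lhs => rw [← smul_inv_smul₀ hR.ne' y]
      rw [enorm_smul, ENNReal.mul_rpow_of_ne_top enorm_ne_top enorm_ne_top,
        Real.enorm_of_nonneg hR.le, ENNReal.ofReal_rpow_of_pos hR]
    · rw [indicator_of_notMem hy, indicator_of_notMem (mt (hmem y).mp hy), mul_zero]
  rw [← lintegral_indicator measurableSet_ball, ← lintegral_indicator measurableSet_ball]
  simp_rw [hscale]
  rw [lintegral_const_mul' _ _ ENNReal.ofReal_ne_top, lintegral_comp_inv_smul_of_pos μ _ hR,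
    ← mul_assoc, ← ENNReal.ofReal_mul (rpow_nonneg hR.le _), ← rpow_natCast, ← rpow_add hR,
    neg_add_eq_sub]

lemma lintegral_japaneseBracket_rpow_neg_lt_top {γ : ℝ} (hγ : (finrank ℝ E : ℝ) < γ) :
    ∫⁻ y, ENNReal.ofReal (japaneseBracket y ^ (-γ)) ∂μ < ∞ := by
  convert (integrable_rpow_neg_one_add_norm_sq (μ := μ) hγ).lintegral_lt_top using 4 with y
  rw [rpow_div_two_eq_sqrt _ (by positivity), japaneseBracket]

lemma setLIntegral_ball_enorm_rpow_neg_lt_top {γ : ℝ} (hγ : 0 ≤ γ)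
    (hγd : γ < finrank ℝ E) : ∫⁻ y in ball (0 : E) 1, ‖y‖ₑ ^ (-γ) ∂μ < ∞ := by
  have hd : 1 ≤ finrank ℝ E := by exact_mod_cast (hγ.trans_lt hγd)
  have : Nontrivial E := Module.nontrivial_of_finrank_pos (R := ℝ) hd
  have hint : IntegrableOn (fun y : E => ‖y‖ ^ (-γ)) (ball 0 1) μ :=
    integrableOn_ball_of_norm_le_rpow (C := 1) hd hγd
      (ae_of_all _ fun y => by simp [abs_of_nonneg (rpow_nonneg (norm_nonneg y) _)])
      (measurable_norm.pow_const _).aestronglyMeasurable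
  refine lt_of_eq_of_lt (setLIntegral_congr_fun_ae measurableSet_ball ?_) hint.lintegral_lt_top
  filter_upwards [Measure.ae_ne μ 0] with y hy _
  rw [← ofReal_norm, ENNReal.ofReal_rpow_of_pos (norm_pos_iff.mpr hy)]

lemma exists_setLIntegral_ball_japaneseBracket_rpow_neg_le {γ : ℝ} (hγ : 0 ≤ γ)
    (hγd : γ ≠ finrank ℝ E) : ∃ C, 0 ≤ C ∧ ∀ R, 0 < R →
      ∫⁻ y in ball (0 : E) R, ENNReal.ofReal (japaneseBracket y ^ (-γ)) ∂μ ≤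
        ENNReal.ofReal (C * R ^ max ((finrank ℝ E : ℝ) - γ) 0) := by
  rcases hγd.lt_or_gt with hlt | hgt
  · set K := ∫⁻ y in ball (0 : E) 1, ‖y‖ₑ ^ (-γ) ∂μ
    refine ⟨K.toReal, ENNReal.toReal_nonneg, fun R hR => ?_⟩
    rw [max_eq_left (by linarith), mul_comm, ENNReal.ofReal_mul (rpow_nonneg hR.le _),
      ENNReal.ofReal_toReal (setLIntegral_ball_enorm_rpow_neg_lt_top μ hγ hlt).ne,
      ← setLIntegral_ball_enorm_rpow_neg μ hR]
    exact setLIntegral_mono' measurableSet_ball fun y _ =>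
      ofReal_japaneseBracket_rpow_neg_le_enorm_rpow y hγ
  · set T := ∫⁻ y, ENNReal.ofReal (japaneseBracket y ^ (-γ)) ∂μ
    refine ⟨T.toReal, ENNReal.toReal_nonneg, fun R _ => ?_⟩
    rw [max_eq_right (by linarith), rpow_zero, mul_one,
      ENNReal.ofReal_toReal (lintegral_japaneseBracket_rpow_neg_lt_top μ hgt).ne]
    exact setLIntegral_le_lintegral _ _

lemma setLIntegral_le_norm_japaneseBracket_rpow_neg_le {R : ℝ} (hR : 0 < R) {γ : ℝ}
    (hγ : 0 ≤ γ) :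
    ∫⁻ y in {y : E | R ≤ ‖y‖}, ENNReal.ofReal (japaneseBracket y ^ (-γ)) ∂μ ≤
      ENNReal.ofReal (√2 ^ γ * R ^ ((finrank ℝ E : ℝ) - γ)) *
        ∫⁻ y, ENNReal.ofReal (japaneseBracket y ^ (-γ)) ∂μ := by
  have hc : 0 ≤ √2 ^ γ * R ^ (-γ) := by positivity
  calc ∫⁻ y in {y : E | R ≤ ‖y‖}, ENNReal.ofReal (japaneseBracket y ^ (-γ)) ∂μ
      ≤ ∫⁻ y in {y : E | R ≤ ‖y‖}, ENNReal.ofReal (√2 ^ γ * R ^ (-γ)) *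
          ENNReal.ofReal (japaneseBracket (R⁻¹ • y) ^ (-γ)) ∂μ :=
        setLIntegral_mono' (measurableSet_le measurable_const measurable_norm) fun y hy => by
          rw [← ENNReal.ofReal_mul hc]
          exact ENNReal.ofReal_le_ofReal (japaneseBracket_rpow_neg_le_of_le_norm hR hy hγ)
    _ ≤ ∫⁻ y, ENNReal.ofReal (√2 ^ γ * R ^ (-γ)) *
          ENNReal.ofReal (japaneseBracket (R⁻¹ • y) ^ (-γ)) ∂μ := setLIntegral_le_lintegral _ _
    _ = _ := by
        rw [lintegral_const_mul' _ _ ENNReal.ofReal_ne_top,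
          lintegral_comp_inv_smul_of_pos μ (fun y => ENNReal.ofReal (japaneseBracket y ^ (-γ))) hR,
          ← mul_assoc, ← ENNReal.ofReal_mul hc, mul_assoc, ← rpow_natCast, ← rpow_add hR,
          neg_add_eq_sub]

lemma exists_setLIntegral_norm_le_norm_sub_japaneseBracket_le {α β m : ℝ} (hα : 0 ≤ α)
    (hβ : 0 ≤ β) (hβd : β ≠ finrank ℝ E) (hαβ : (finrank ℝ E : ℝ) < α + β) (hmα : m ≤ α)
    (hmαβ : m ≤ α + β - finrank ℝ E) :
    ∃ C, 0 ≤ C ∧ ∀ x : E, ∫⁻ y in {y | ‖y‖ ≤ ‖x - y‖},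
      ENNReal.ofReal (japaneseBracket (x - y) ^ (-α) * japaneseBracket y ^ (-β)) ∂μ ≤
        ENNReal.ofReal (C * japaneseBracket x ^ (-m)) := by
  obtain ⟨K, hK, hball⟩ := exists_setLIntegral_ball_japaneseBracket_rpow_neg_le μ hβ hβd
  obtain ⟨T, hT, hT_eq⟩ : ∃ T, 0 ≤ T ∧
      ∫⁻ y, ENNReal.ofReal (japaneseBracket y ^ (-(α + β))) ∂μ = ENNReal.ofReal T :=
    ⟨_, ENNReal.toReal_nonneg,
      (ENNReal.ofReal_toReal (lintegral_japaneseBracket_rpow_neg_lt_top μ hαβ).ne).symm⟩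
  refine ⟨2 ^ α * K + √2 ^ (α + β) * T, by positivity, fun x => ?_⟩
  set s := japaneseBracket x
  have hs : 1 ≤ s := one_le_japaneseBracket x
  have hs₀ : 0 < s := japaneseBracket_pos x
  rw [← lintegral_inter_add_sdiff _ _ measurableSet_ball, add_mul,
    ENNReal.ofReal_add (mul_nonneg (by positivity) (rpow_nonneg hs₀.le _))
      (mul_nonneg (by positivity) (rpow_nonneg hs₀.le _))]
  refine add_le_add ((setLIntegral_norm_le_norm_sub_inter_ball_le μ hα x).trans ?_)
    ((setLIntegral_norm_le_norm_sub_diff_ball_le μ hα x).trans ?_)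
  · grw [hball s hs₀]
    rw [← ENNReal.ofReal_mul (mul_nonneg (by positivity) (rpow_nonneg hs₀.le _)),
      mul_mul_mul_comm, ← rpow_add hs₀]
    have : max ((finrank ℝ E : ℝ) - β) 0 ≤ α - m := max_le (by linarith) (by linarith)
    gcongr
    linarith
  · grw [setLIntegral_le_norm_japaneseBracket_rpow_neg_le μ hs₀ (by linarith)]
    rw [hT_eq, ← ENNReal.ofReal_mul (mul_nonneg (by positivity) (rpow_nonneg hs₀.le _)),
      mul_right_comm]
    gcongr
    linarith

lemma exists_lintegral_japaneseBracket_rpow_neg_mul_le {α β : ℝ} (hα : 0 ≤ α) (hβ : 0 ≤ β)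
    (hαd : α ≠ finrank ℝ E) (hβd : β ≠ finrank ℝ E) (hαβ : (finrank ℝ E : ℝ) < α + β) :
    ∃ C, ∀ x : E,
      ∫⁻ y, ENNReal.ofReal (japaneseBracket (x - y) ^ (-α) * japaneseBracket y ^ (-β)) ∂μ ≤
        ENNReal.ofReal (C * japaneseBracket x ^ (-min α (min β (α + β - finrank ℝ E)))) := by
  set m := min α (min β (α + β - finrank ℝ E))
  have hmα : m ≤ α := min_le_left _ _
  have hmβ : m ≤ β := (min_le_right _ _).trans (min_le_left _ _)
  have hmαβ : m ≤ α + β - finrank ℝ E := (min_le_right _ _).trans (min_le_right _ _)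
  obtain ⟨C₁, hC₁, h₁⟩ :=
    exists_setLIntegral_norm_le_norm_sub_japaneseBracket_le μ hα hβ hβd hαβ hmα hmαβ
  obtain ⟨C₂, hC₂, h₂⟩ := exists_setLIntegral_norm_le_norm_sub_japaneseBracket_le μ hβ hα hαd
    (by linarith) hmβ (by linarith)
  refine ⟨C₁ + C₂, fun x => ?_⟩
  have hswap : ∫⁻ y in {y | ‖x - y‖ ≤ ‖y‖},
      ENNReal.ofReal (japaneseBracket (x - y) ^ (-α) * japaneseBracket y ^ (-β)) ∂μ =
        ∫⁻ y in {y | ‖y‖ ≤ ‖x - y‖},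
          ENNReal.ofReal (japaneseBracket (x - y) ^ (-β) * japaneseBracket y ^ (-α)) ∂μ := by
    have := (Measure.measurePreserving_sub_left μ x).setLIntegral_comp_preimage_emb
      (measurableEmbedding_subLeft x)
      (fun y => ENNReal.ofReal (japaneseBracket (x - y) ^ (-β) * japaneseBracket y ^ (-α)))
      {y | ‖y‖ ≤ ‖x - y‖}
    simpa [mul_comm] using this
  calc _ ≤ ∫⁻ y in {y | ‖y‖ ≤ ‖x - y‖},
          ENNReal.ofReal (japaneseBracket (x - y) ^ (-α) * japaneseBracket y ^ (-β)) ∂μ +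
        ∫⁻ y in {y | ‖x - y‖ ≤ ‖y‖},
          ENNReal.ofReal (japaneseBracket (x - y) ^ (-α) * japaneseBracket y ^ (-β)) ∂μ := by
        rw [← setLIntegral_univ]
        exact (lintegral_mono_set fun y _ => le_total ‖y‖ ‖x - y‖).trans
          (lintegral_union_le _ _ _)
    _ ≤ ENNReal.ofReal (C₁ * japaneseBracket x ^ (-m)) +
          ENNReal.ofReal (C₂ * japaneseBracket x ^ (-m)) := add_le_add (h₁ x) (hswap ▸ h₂ x)
    _ = _ := by
        rw [← ENNReal.ofReal_add (mul_nonneg hC₁ (rpow_nonneg (japaneseBracket_pos x).le _))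
          (mul_nonneg hC₂ (rpow_nonneg (japaneseBracket_pos x).le _)), add_mul]

end Integral

theorem stmt_2_general (n : ℕ) (α β : ℝ) (hα : 0 < α) (hβ : 0 < β)
    (hαn : α ≠ n) (hβn : β ≠ n) (hαβ : (n : ℝ) < α + β) :
    ∃ C : ℝ, 0 < C ∧ ∀ x : EuclideanSpace ℝ (Fin n),
      (∫ x₁ : EuclideanSpace ℝ (Fin n),
          Real.sqrt (1 + ‖x - x₁‖ ^ 2) ^ (-α) * Real.sqrt (1 + ‖x₁‖ ^ 2) ^ (-β))
        ≤ C * Real.sqrt (1 + ‖x‖ ^ 2) ^ (-min α (min β (α + β - n))) := by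
  have hd : finrank ℝ (EuclideanSpace ℝ (Fin n)) = n := finrank_euclideanSpace_fin
  obtain ⟨C, hC⟩ := exists_lintegral_japaneseBracket_rpow_neg_mul_le
    (volume : Measure (EuclideanSpace ℝ (Fin n))) hα.le hβ.le (by rwa [hd]) (by rwa [hd])
    (by rwa [hd])
  simp_rw [hd] at hC
  refine ⟨max C 1, lt_max_of_lt_right one_pos, fun x => ?_⟩
  rw [integral_eq_lintegral_of_nonneg_ae (ae_of_all _ fun y => by positivity) (by fun_prop)]
  refine ENNReal.toReal_le_of_le_ofReal (by positivity) ((hC x).trans ?_)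
  exact ENNReal.ofReal_le_ofReal <|
    mul_le_mul_of_nonneg_right (le_max_left C 1) (rpow_nonneg (japaneseBracket_pos x).le _)

/-- For `α, β > 0` with `α ≠ n`, `β ≠ n`, `α + β > n`, one has
`∫ ⟨x - x₁⟩^{-α} ⟨x₁⟩^{-β} dx₁ ≤ C ⟨x⟩^{-min(α, β, α+β-n)}` uniformly in `x ∈ ℝⁿ`. -/
theorem stmt_2 (n : ℕ) (hn : 1 ≤ n) (α β : ℝ) (hα : 0 < α) (hβ : 0 < β)
    (hαn : α ≠ n) (hβn : β ≠ n) (hαβ : (n : ℝ) < α + β) :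
    ∃ C : ℝ, 0 < C ∧ ∀ x : EuclideanSpace ℝ (Fin n),
      (∫ x₁ : EuclideanSpace ℝ (Fin n),
          Real.sqrt (1 + ‖x - x₁‖ ^ 2) ^ (-α) * Real.sqrt (1 + ‖x₁‖ ^ 2) ^ (-β))
        ≤ C * Real.sqrt (1 + ‖x‖ ^ 2) ^ (-min α (min β (α + β - n))) :=
  stmt_2_general n α β hα hβ hαn hβn hαβ
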